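/- arXiv:2210.17471 — 6 statements merged into one kernel-verified Lean document; each statement's English description precedes it below -/
import Mathlib

section
/- Let Lx > 0, c > 0, and set a* = (Lx/2)·√(4c/Lx² + 1)/√3. Define F(x, a) = 1/((x−a)² + c) + 1/((x+a)² + c). Then F(0, a*) = F(Lx/2, a*), i.e., with antennas at ±a*, the received power at the centre x = 0 equals the received power at the boundary x = Lx/2. -/
/-!
Put `h = Lx / 2`. By construction `3 a*² = h² + c`, and under this relation the denominators
become `a² + c = 4a² − h²` and `(h ∓ a)² + c = 2a(2a ∓ h)`, so
`1/(2a(2a − h)) + 1/(2a(2a + h)) = 2/(4a² − h²) = F(0, a)`.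
-/

lemma one_div_add_one_div_eq_two_div_of_three_mul_sq_eq {h a c : ℝ} (hc : 0 < c)
    (hrel : 3 * a ^ 2 = h ^ 2 + c) :
    1 / ((h - a) ^ 2 + c) + 1 / ((h + a) ^ 2 + c) = 2 / (a ^ 2 + c) := by
  have hminus : (h - a) ^ 2 + c = 2 * a * (2 * a - h) := by linear_combination -hrel
  have hplus : (h + a) ^ 2 + c = 2 * a * (2 * a + h) := by linear_combination -hrel
  have hcentre : a ^ 2 + c = (2 * a - h) * (2 * a + h) := by linear_combination -hrel
  obtain ⟨h2a, hm⟩ := mul_ne_zero_iff.mp (hminus ▸ (by positivity : (h - a) ^ 2 + c ≠ 0))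
  obtain ⟨-, hp⟩ := mul_ne_zero_iff.mp (hplus ▸ (by positivity : (h + a) ^ 2 + c ≠ 0))
  have ha : a ≠ 0 := right_ne_zero_of_mul h2a
  rw [hminus, hplus, hcentre]
  field_simp
  ring

lemma three_mul_sq_half_mul_sqrt_div_sqrt_three {L c : ℝ} (hL : L ≠ 0) (hc : 0 ≤ c) :
    3 * (L / 2 * √(4 * c / L ^ 2 + 1) / √3) ^ 2 = (L / 2) ^ 2 + c := by
  rw [div_pow, mul_pow, Real.sq_sqrt (by positivity), Real.sq_sqrt zero_le_three]
  field_simp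
  ring

/-- With antennas at ±a*, a* = (Lx/2)√(4c/Lx²+1)/√3, the received power at the
centre x = 0 equals the received power at the boundary x = Lx/2. -/
theorem stmt_7 (Lx c : ℝ) (hLx : 0 < Lx) (hc : 0 < c)
    (astar : ℝ) (hastar : astar = (Lx / 2) * Real.sqrt (4 * c / Lx ^ 2 + 1) / Real.sqrt 3)
    (F : ℝ → ℝ → ℝ)
    (hF : ∀ x a, F x a = 1 / ((x - a) ^ 2 + c) + 1 / ((x + a) ^ 2 + c)) :
    F 0 astar = F (Lx / 2) astar := by
  have hrel : 3 * astar ^ 2 = (Lx / 2) ^ 2 + c := by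
    rw [hastar]
    exact three_mul_sq_half_mul_sqrt_div_sqrt_three hLx.ne' hc.le
  rw [hF, hF, one_div_add_one_div_eq_two_div_of_three_mul_sq_eq hc hrel]
  ring
end

section
/- For t ∈ [5/4, 3], the function η(t) = ((t+1)^{3/2} + t + 1)/(4t) satisfies η(t) ≥ 1, with equality if and only if t = 3. -/
/-- For t ∈ [5/4, 3], η(t) = ((t+1)^{3/2} + t + 1)/(4t) ≥ 1 with equality iff t = 3. -/
theorem stmt_13 (η : ℝ → ℝ)
    (hη : ∀ t, η t = ((t + 1) ^ ((3 : ℝ) / 2) + t + 1) / (4 * t)) :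
    ∀ t ∈ Set.Icc (5 / 4 : ℝ) 3, 1 ≤ η t ∧ (η t = 1 ↔ t = 3) := by
  intro t ht
  obtain ⟨h1, h2⟩ := ht
  have ht0 : (0:ℝ) < t := by linarith
  have hb : (0:ℝ) ≤ t + 1 := by linarith
  have hrw : (t + 1) ^ ((3 : ℝ) / 2) = Real.sqrt ((t + 1) ^ 3) := by
    rw [show ((3:ℝ)/2) = ((3:ℕ):ℝ) * (1/2) by norm_num, Real.rpow_mul hb,
      Real.rpow_natCast, Real.sqrt_eq_rpow]
  have hsq : (3*t - 1)^2 ≤ (t+1)^3 := by nlinarith [sq_nonneg (t - 3)]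
  have hle : 3*t - 1 ≤ Real.sqrt ((t+1)^3) :=
    by rw [Real.le_sqrt (by linarith)] <;> nlinarith [sq_nonneg (t-3), pow_nonneg hb 3]
  rw [hη t, hrw]
  constructor
  · rw [le_div_iff₀ (by linarith)]
    linarith
  · constructor
    · intro h
      rw [div_eq_one_iff_eq (by linarith)] at h
      have hs : Real.sqrt ((t+1)^3) = 3*t - 1 := by linarith
      have : (t+1)^3 = (3*t-1)^2 := by
        rw [← hs, Real.sq_sqrt (by positivity)]
      nlinarith [sq_nonneg (t - 3), ht0]
    · intro h
      subst h
      have : Real.sqrt ((3+1:ℝ)^3) = 8 := by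
        rw [show ((3:ℝ)+1)^3 = 8^2 by norm_num]
        exact Real.sqrt_sq (by norm_num)
      rw [this]; norm_num
end

section
/- Let c > 0 and x > √(c/3). Define g(a) = 1/((x−a)² + c) + 1/((x+a)² + c) and a⁺ = (1/2)√(4x√(4x²+4c) − (4x²+4c)) (which is real and positive). Then g(a⁺) > g(0); i.e., when the nonzero stationary points exist, placing the antennas symmetrically at ±a⁺ yields strictly larger value at x than co-locating both at 0. -/
/-- When x > √(c/3), the nonzero stationary point a⁺ = (1/2)√(4x√(4x²+4c) − (4x²+4c))
yields a strictly larger value than co-locating both antennas at 0: g(a⁺) > g(0). -/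
theorem stmt_14 (c x : ℝ) (hc : 0 < c) (hx : x > Real.sqrt (c / 3))
    (g : ℝ → ℝ) (hg : ∀ a, g a = 1 / ((x - a) ^ 2 + c) + 1 / ((x + a) ^ 2 + c))
    (aplus : ℝ)
    (haplus : aplus = (1 / 2) * Real.sqrt
      (4 * x * Real.sqrt (4 * x ^ 2 + 4 * c) - (4 * x ^ 2 + 4 * c))) :
    g aplus > g 0 := by
  have hx0 : 0 < x := lt_of_le_of_lt (Real.sqrt_nonneg _) hx
  have h3 : c < 3 * x ^ 2 := by
    have h := (Real.sqrt_lt' hx0).mp hx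
    linarith
  set u : ℝ := x ^ 2 + c with hud
  have hu : 0 < u := by positivity
  set s : ℝ := Real.sqrt (4 * x ^ 2 + 4 * c) with hsd
  have hs2 : s ^ 2 = 4 * u := by
    rw [hsd, Real.sq_sqrt (by positivity)]; ring
  have hs0 : 0 < s := Real.sqrt_pos.mpr (by positivity)
  have hux : x ^ 2 < u := by simp [hud]; linarith
  have h4x : u < 4 * x ^ 2 := by simp [hud]; linarith
  have hxs_u : u < x * s := by nlinarith [mul_pos hx0 hs0]
  have h2u : x * s < 2 * u := by nlinarith [mul_pos hx0 hs0]
  have ha0 : 0 ≤ aplus := by rw [haplus]; positivity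
  have ha2 : aplus ^ 2 = x * s - u := by
    rw [haplus, mul_pow, Real.sq_sqrt (by nlinarith : (0:ℝ) ≤ 4 * x * s - (4 * x ^ 2 + 4 * c))]
    simp [hud]; ring
  have hd1 : (x - aplus) ^ 2 + c = x * s - 2 * x * aplus := by
    rw [hud] at ha2; linear_combination ha2
  have hd2 : (x + aplus) ^ 2 + c = x * s + 2 * x * aplus := by
    rw [hud] at ha2; linear_combination ha2
  have hd1p : 0 < x * s - 2 * x * aplus := by
    have h2a : 2 * aplus < s := by nlinarith
    nlinarith [mul_pos hx0 (sub_pos.mpr h2a)]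
  have hd2p : 0 < x * s + 2 * x * aplus := by positivity
  have key : 8 * x * u < s * (u + 4 * x ^ 2) := by
    nlinarith [mul_pos hu (mul_pos (sub_pos.mpr h4x) (sub_pos.mpr h4x)),
      mul_pos hx0 hu, mul_pos hs0 (by positivity : (0:ℝ) < u + 4 * x ^ 2)]
  rw [hg, hg, hd1, hd2]
  have hg0 : 1 / ((x - 0) ^ 2 + c) + 1 / ((x + 0) ^ 2 + c) = 2 / u := by
    rw [hud]; ring
  rw [hg0, gt_iff_lt, div_add_div _ _ hd1p.ne' hd2p.ne',
    div_lt_div_iff₀ hu (mul_pos hd1p hd2p)]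
  nlinarith [mul_lt_mul_of_pos_left key hx0, ha2, hs2]
end

section
/- Let c > 0 and a > 0. The function x ↦ F(x) = 1/((x−a)² + c) + 1/((x+a)² + c) restricted to [0, Lx/2] (with a ≤ Lx/2) attains its minimum either at x = 0 or at x = Lx/2; that is, min over [0, Lx/2] of F equals min(F(0), F(Lx/2)). -/
/-- On [0, Lx/2], the minimum of F(x) = 1/((x−a)²+c) + 1/((x+a)²+c) is attained
at an endpoint: min over [0, Lx/2] of F equals min(F(0), F(Lx/2)). -/
theorem stmt_16 (c a Lx : ℝ) (hc : 0 < c) (ha : 0 < a) (haLx : a ≤ Lx / 2)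
    (F : ℝ → ℝ) (hF : ∀ x, F x = 1 / ((x - a) ^ 2 + c) + 1 / ((x + a) ^ 2 + c)) :
    ∀ x ∈ Set.Icc (0 : ℝ) (Lx / 2), min (F 0) (F (Lx / 2)) ≤ F x := by
  have hpos1 : ∀ t : ℝ, 0 < (t - a) ^ 2 + c := fun t => by positivity
  have hpos2 : ∀ t : ℝ, 0 < (t + a) ^ 2 + c := fun t => by positivity
  have key : ∀ x y : ℝ, F x - F y =
      2 * (x ^ 2 - y ^ 2) *
        (4 * a ^ 2 * (a ^ 2 + c) - (x ^ 2 + a ^ 2 + c) * (y ^ 2 + a ^ 2 + c)) /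
      (((x - a) ^ 2 + c) * ((x + a) ^ 2 + c) * (((y - a) ^ 2 + c) * ((y + a) ^ 2 + c))) := by
    intro x y
    rw [hF, hF]
    field_simp
    ring
  rintro x ⟨hx0, hxL⟩
  by_cases hq : (x ^ 2 + a ^ 2 + c) * ((0 : ℝ) ^ 2 + a ^ 2 + c) ≤ 4 * a ^ 2 * (a ^ 2 + c)
  · -- F 0 ≤ F x
    have h := key x 0
    have hnum : 0 ≤ 2 * (x ^ 2 - 0 ^ 2) *
        (4 * a ^ 2 * (a ^ 2 + c) - (x ^ 2 + a ^ 2 + c) * ((0 : ℝ) ^ 2 + a ^ 2 + c)) := by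
      have hx2 : (0:ℝ) ≤ x ^ 2 - 0 ^ 2 := by nlinarith [sq_nonneg x]
      nlinarith
    have hden : 0 < ((x - a) ^ 2 + c) * ((x + a) ^ 2 + c) *
        ((((0:ℝ) - a) ^ 2 + c) * (((0:ℝ) + a) ^ 2 + c)) := by positivity
    have : 0 ≤ F x - F 0 := by rw [h]; exact div_nonneg hnum hden.le
    calc min (F 0) (F (Lx / 2)) ≤ F 0 := min_le_left _ _
      _ ≤ F x := by linarith
  · -- F (Lx/2) ≤ F x
    push_neg at hq
    have h := key (Lx / 2) x
    have hLx : x ≤ Lx / 2 := hxL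
    have hw : (x ^ 2 + a ^ 2 + c) * ((0 : ℝ) ^ 2 + a ^ 2 + c)
        ≤ ((Lx / 2) ^ 2 + a ^ 2 + c) * (x ^ 2 + a ^ 2 + c) := by
      have h1 : (0:ℝ) ^ 2 + a ^ 2 + c ≤ (Lx / 2) ^ 2 + a ^ 2 + c := by nlinarith
      have h2 : 0 < x ^ 2 + a ^ 2 + c := by positivity
      nlinarith
    have hnum : 2 * ((Lx / 2) ^ 2 - x ^ 2) *
        (4 * a ^ 2 * (a ^ 2 + c) - ((Lx / 2) ^ 2 + a ^ 2 + c) * (x ^ 2 + a ^ 2 + c)) ≤ 0 := by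
      have hx2 : 0 ≤ (Lx / 2) ^ 2 - x ^ 2 := by nlinarith
      nlinarith
    have hden : 0 < ((Lx / 2 - a) ^ 2 + c) * ((Lx / 2 + a) ^ 2 + c) *
        (((x - a) ^ 2 + c) * ((x + a) ^ 2 + c)) := by positivity
    have : F (Lx / 2) - F x ≤ 0 := by
      rw [h]; exact div_nonpos_of_nonpos_of_nonneg hnum hden.le
    calc min (F 0) (F (Lx / 2)) ≤ F (Lx / 2) := min_le_right _ _
      _ ≤ F x := by linarith
end

section
/- Let Lx, Ly, Lz' > 0 with 4(Ly/Lx)² + (Lz'/Lx)² ≥ 3 and c = Ly² + Lz'²/4. Then for all a ∈ [0, Lx/2], min over x ∈ [−Lx/2, Lx/2] of F(x, a) ≤ min over x of F(x, 0) = 2/(Lx²/4 + c), where F(x,a) = 1/((x−a)² + c) + 1/((x+a)² + c). That is, co-locating both antennas at the origin is optimal for the max-min problem when the geometry satisfies 4Ly² + Lz'² ≥ 3Lx². -/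
/-- If 4(Ly/Lx)² + (Lz'/Lx)² ≥ 3, co-locating both antennas at the origin is
optimal for the max-min problem: for all a ∈ [0, Lx/2],
min_x F(x,a) ≤ min_x F(x,0) = 2/(Lx²/4 + c). -/
theorem stmt_17 (Lx Ly Lz' c : ℝ) (hLx : 0 < Lx) (hLy : 0 < Ly) (hLz' : 0 < Lz')
    (hc : c = Ly ^ 2 + Lz' ^ 2 / 4) (hgeo : 4 * c ≥ 3 * Lx ^ 2)
    (F : ℝ → ℝ → ℝ)
    (hF : ∀ x a, F x a = 1 / ((x - a) ^ 2 + c) + 1 / ((x + a) ^ 2 + c)) :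
    (sInf ((fun x => F x 0) '' Set.Icc (-(Lx / 2)) (Lx / 2)) = 2 / (Lx ^ 2 / 4 + c)) ∧
    (∀ a ∈ Set.Icc (0 : ℝ) (Lx / 2),
      sInf ((fun x => F x a) '' Set.Icc (-(Lx / 2)) (Lx / 2)) ≤ 2 / (Lx ^ 2 / 4 + c)) := by
  have hc0 : 0 < c := by rw [hc]; positivity
  have hs0 : 0 < Lx / 2 := by linarith
  have hbdd : ∀ a, BddBelow ((fun x => F x a) '' Set.Icc (-(Lx / 2)) (Lx / 2)) := by
    intro a
    refine ⟨0, ?_⟩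
    rintro y ⟨x, hx, rfl⟩
    simp only [hF]
    have h1 : 0 < (x - a) ^ 2 + c := by positivity
    have h2 : 0 < (x + a) ^ 2 + c := by positivity
    positivity
  have hmem : (Lx / 2) ∈ Set.Icc (-(Lx / 2)) (Lx / 2) := ⟨by linarith, le_rfl⟩
  have hFval : F (Lx / 2) 0 = 2 / (Lx ^ 2 / 4 + c) := by
    rw [hF]
    have h1 : 0 < (Lx / 2) ^ 2 + c := by positivity
    field_simp
    ring
  constructor
  · apply le_antisymm
    · have := csInf_le (hbdd 0) ⟨Lx / 2, hmem, rfl⟩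
      simpa [hFval] using this
    · apply le_csInf ((Set.nonempty_Icc.mpr (by linarith : -(Lx/2) ≤ Lx/2)).image _)
      rintro y ⟨x, hx, rfl⟩
      simp only [hF]
      have hx2 : x ^ 2 ≤ Lx ^ 2 / 4 := by
        obtain ⟨h1, h2⟩ := hx
        nlinarith
      have hd1 : 0 < (x - 0) ^ 2 + c := by positivity
      have hd2 : 0 < (x + 0) ^ 2 + c := by positivity
      have hd3 : 0 < Lx ^ 2 / 4 + c := by positivity
      rw [div_add_div _ _ (ne_of_gt hd1) (ne_of_gt hd2), div_le_div_iff₀ hd3 (by positivity)]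
      nlinarith [sq_nonneg x]
  · intro a ha
    obtain ⟨ha0, ha1⟩ := ha
    refine le_trans (csInf_le (hbdd a) ⟨Lx / 2, hmem, rfl⟩) ?_
    simp only [hF]
    have hd1 : 0 < (Lx / 2 - a) ^ 2 + c := by positivity
    have hd2 : 0 < (Lx / 2 + a) ^ 2 + c := by positivity
    have hd3 : 0 < Lx ^ 2 / 4 + c := by positivity
    have hkey : 0 ≤ a ^ 2 * (a ^ 2 + c - 3 * (Lx ^ 2 / 4)) := by
      apply mul_nonneg (sq_nonneg a)
      nlinarith
    rw [div_add_div _ _ (ne_of_gt hd1) (ne_of_gt hd2), div_le_div_iff₀ (by positivity) hd3]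
    nlinarith [hkey]
end

section
/- For c > 0 and fixed x with |x| ≤ √(c/3), the function g(a) = 1/((x−a)² + c) + 1/((x+a)² + c) has a global maximum at a = 0 and is monotonically non-increasing in |a|. -/
/-- For |x| ≤ √(c/3), g(a) = 1/((x−a)²+c) + 1/((x+a)²+c) has a global maximum at
a = 0 and is monotonically non-increasing in |a|. -/
theorem stmt_18 (c x : ℝ) (hc : 0 < c) (hx : x ^ 2 ≤ c / 3)
    (g : ℝ → ℝ) (hg : ∀ a, g a = 1 / ((x - a) ^ 2 + c) + 1 / ((x + a) ^ 2 + c)) :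
    (∀ a : ℝ, g a ≤ g 0) ∧ (∀ a b : ℝ, |a| ≤ |b| → g b ≤ g a) := by
  have key : ∀ a b : ℝ, a ^ 2 ≤ b ^ 2 → g b ≤ g a := by
    intro a b hab
    rw [hg, hg]
    have h1 : (0:ℝ) < (x - a) ^ 2 + c := by positivity
    have h2 : (0:ℝ) < (x + a) ^ 2 + c := by positivity
    have h3 : (0:ℝ) < (x - b) ^ 2 + c := by positivity
    have h4 : (0:ℝ) < (x + b) ^ 2 + c := by positivity
    rw [div_add_div _ _ (ne_of_gt h3) (ne_of_gt h4),
        div_add_div _ _ (ne_of_gt h1) (ne_of_gt h2),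
        div_le_div_iff₀ (by positivity) (by positivity)]
    nlinarith [mul_nonneg (sub_nonneg.2 hab)
        (sub_nonneg.2 (show 4 * x ^ 2 * (x ^ 2 + c) ≤ ((x ^ 2 + c) + a ^ 2) * ((x ^ 2 + c) + b ^ 2)
          from by nlinarith [sq_nonneg a, sq_nonneg b, sq_nonneg x])),
      sq_nonneg a, sq_nonneg b, sq_nonneg x, mul_pos h1 h2, mul_pos h3 h4]
  constructor
  · intro a
    have := key 0 a (by nlinarith [sq_nonneg a])
    simpa using this
  · intro a b hab
    refine key a b ?_
    rw [← sq_abs a, ← sq_abs b]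
    exact pow_le_pow_left₀ (abs_nonneg a) hab 2
end
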